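/- The subcomplex ((I − Π^•)Y^•, 𝒜^•) is exact: for every 1 ≤ i ≤ n, if y ∈ Y^i satisfies Π^i y = 0 and 𝒜^i y = 0 (with the convention 𝒜^n = 0), then there exists x ∈ Y^{i−1} with Π^{i−1} x = 0 and 𝒜^{i−1} x = y; moreover if y ∈ Y^0 satisfies Π^0 y = 0 and 𝒜^0 y = 0 then y = 0. -/

import Mathlib

/-!
Let `y = (ω, μ) ∈ Y^{m+1}` with `Π y = 0` and `𝒜 y = 0`. Then `ω ∈ ran S^m`: below `J` this is
the first component of `Π y = 0`, from `J` on `S^m` is onto. Anticommutativity and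
`S^m T ω = ω` give `S^{m+1} (μ + D̃ T ω) = D ω - D ω = 0`, and an element of `ker S^{m+1}`
vanishes: below `J` because `S^{m+1}` is injective, above `J` because its projection onto
`ker S^{m+1}` is the second component of `Π y`. So `y = 𝒜 (0, −T ω)`, and `(0, −T ω)` is
killed by `Π` because `T ω = T S T ω = T ω − P_{ker S} T ω`.
-/

noncomputable section

/-- `P_{ran S^{i-1}} : Z^i → Z^i` (with `P_{ran S^{-1}} = 0`). -/
def projS {Z : ℕ → Type*}
    [∀ i, NormedAddCommGroup (Z i)] [∀ i, InnerProductSpace ℝ (Z i)]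
    (Pran : ∀ i, Z (i + 1) →L[ℝ] Z (i + 1)) : ∀ i, Z i →L[ℝ] Z i
  | 0 => 0
  | m + 1 => Pran m

/-- The twisted differential `𝒜^i(ω, μ) = (D^i ω − S^i μ, D̃^i μ)`. -/
def twistA {Z Zt : ℕ → Type*}
    [∀ i, NormedAddCommGroup (Z i)] [∀ i, InnerProductSpace ℝ (Z i)]
    [∀ i, NormedAddCommGroup (Zt i)] [∀ i, InnerProductSpace ℝ (Zt i)]
    (D : ∀ i, Z i →L[ℝ] Z (i + 1)) (Dt : ∀ i, Zt i →L[ℝ] Zt (i + 1))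
    (S : ∀ i, Zt i →L[ℝ] Z (i + 1)) (i : ℕ) :
    (Z i × Zt i) →L[ℝ] (Z (i + 1) × Zt (i + 1)) :=
  ((D i).comp (ContinuousLinearMap.fst ℝ (Z i) (Zt i))
      - (S i).comp (ContinuousLinearMap.snd ℝ (Z i) (Zt i))).prod
    ((Dt i).comp (ContinuousLinearMap.snd ℝ (Z i) (Zt i)))

/-- The cochain projection `Π^i : Y^i → Y^i`:
`Π^i(ω,μ) = (P_{(ran S^{i-1})^⊥} ω, T^{i+1} D^i P_{(ran S^{i-1})^⊥} ω)` for `i ≤ J`, and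
`Π^i(ω,μ) = (0, P_{ker S^i}(μ + D̃^{i-1} T^i ω))` for `i > J` (the case `i = 0 > J` is
vacuous since `J ≥ 0`). -/
def piMap {Z Zt : ℕ → Type*}
    [∀ i, NormedAddCommGroup (Z i)] [∀ i, InnerProductSpace ℝ (Z i)]
    [∀ i, NormedAddCommGroup (Zt i)] [∀ i, InnerProductSpace ℝ (Zt i)]
    (D : ∀ i, Z i →L[ℝ] Z (i + 1)) (Dt : ∀ i, Zt i →L[ℝ] Zt (i + 1))
    (Pran : ∀ i, Z (i + 1) →L[ℝ] Z (i + 1)) (Pker : ∀ i, Zt i →L[ℝ] Zt i)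
    (T : ∀ i, Z (i + 1) →L[ℝ] Zt i) (J : ℕ) (i : ℕ) :
    (Z i × Zt i) →L[ℝ] (Z i × Zt i) :=
  if i ≤ J then
    (((ContinuousLinearMap.id ℝ (Z i) - projS Pran i).comp
        (ContinuousLinearMap.fst ℝ (Z i) (Zt i))).prod
      (((T i).comp ((D i).comp (ContinuousLinearMap.id ℝ (Z i) - projS Pran i))).comp
        (ContinuousLinearMap.fst ℝ (Z i) (Zt i))))
  else
    match i with
    | 0 => 0
    | m + 1 =>
      (0 : (Z (m + 1) × Zt (m + 1)) →L[ℝ] Z (m + 1)).prod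
        ((Pker (m + 1)).comp
          ((ContinuousLinearMap.snd ℝ (Z (m + 1)) (Zt (m + 1)))
            + ((Dt m).comp (T m)).comp (ContinuousLinearMap.fst ℝ (Z (m + 1)) (Zt (m + 1)))))

end

open Function

section

variable {Z Zt : ℕ → Type*}
    [∀ i, NormedAddCommGroup (Z i)] [∀ i, InnerProductSpace ℝ (Z i)]
    [∀ i, NormedAddCommGroup (Zt i)] [∀ i, InnerProductSpace ℝ (Zt i)]
    {D : ∀ i, Z i →L[ℝ] Z (i + 1)} {Dt : ∀ i, Zt i →L[ℝ] Zt (i + 1)}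
    {S : ∀ i, Zt i →L[ℝ] Z (i + 1)}
    {Pran : ∀ i, Z (i + 1) →L[ℝ] Z (i + 1)} {Pker : ∀ i, Zt i →L[ℝ] Zt i}
    {T : ∀ i, Z (i + 1) →L[ℝ] Zt i} {J : ℕ}

@[simp]
theorem twistA_apply (i : ℕ) (ω : Z i) (μ : Zt i) :
    twistA D Dt S i (ω, μ) = (D i ω - S i μ, Dt i μ) := rfl

theorem piMap_of_le {i : ℕ} (hi : i ≤ J) (ω : Z i) (μ : Zt i) :
    piMap D Dt Pran Pker T J i (ω, μ) =
      (ω - projS Pran i ω, T i (D i (ω - projS Pran i ω))) := by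
  simp [piMap, hi]

theorem piMap_succ_of_lt {m : ℕ} (hm : J < m + 1) (ω : Z (m + 1)) (μ : Zt (m + 1)) :
    piMap D Dt Pran Pker T J (m + 1) (ω, μ) = (0, Pker (m + 1) (μ + Dt m (T m ω))) := by
  simp [piMap, hm.not_ge]

theorem pker_T_apply_eq_zero {i : ℕ} (hTS : ∀ x, T i (S i x) = x - Pker i x)
    (hST : ∀ x, S i (T i x) = Pran i x) {ω : Z (i + 1)} (hω : Pran i ω = ω) :
    Pker i (T i ω) = 0 := by
  have h := hTS (T i ω)
  rw [hST, hω] at h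
  exact sub_eq_self.mp h.symm

theorem pran_apply_eq_self_of_piMap_eq_zero {m : ℕ}
    (hSsurj : J ≤ m → Surjective (S m))
    (hPranOrth : ∀ x, x - Pran m x ∈ (LinearMap.range (S m : Zt m →ₗ[ℝ] Z (m + 1)))ᗮ)
    {ω : Z (m + 1)} {μ : Zt (m + 1)} (hPi : piMap D Dt Pran Pker T J (m + 1) (ω, μ) = 0) :
    Pran m ω = ω := by
  rcases le_or_gt (m + 1) J with hle | hlt
  · rw [piMap_of_le hle, Prod.mk_eq_zero] at hPi
    exact (sub_eq_zero.mp hPi.1).symm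
  · have h := hPranOrth ω
    rw [LinearMap.range_eq_top.mpr (hSsurj (Nat.le_of_lt_succ hlt)),
      Submodule.top_orthogonal_eq_bot, Submodule.mem_bot, sub_eq_zero] at h
    exact h.symm

theorem add_Dt_T_apply_eq_zero_of_piMap_eq_zero {m : ℕ}
    (hanti : ∀ x, S (m + 1) (Dt m x) = -D (m + 1) (S m x))
    (hST : ∀ x, S m (T m x) = Pran m x)
    (hSinj : m + 1 ≤ J → Injective (S (m + 1)))
    (hPkerOrth : ∀ x, x - Pker (m + 1) x ∈
      (LinearMap.ker (S (m + 1) : Zt (m + 1) →ₗ[ℝ] Z (m + 1 + 1)))ᗮ)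
    {ω : Z (m + 1)} {μ : Zt (m + 1)} (hω : Pran m ω = ω)
    (hPi : piMap D Dt Pran Pker T J (m + 1) (ω, μ) = 0)
    (hA : twistA D Dt S (m + 1) (ω, μ) = 0) :
    μ + Dt m (T m ω) = 0 := by
  rw [twistA_apply, Prod.mk_eq_zero, sub_eq_zero] at hA
  have hker : S (m + 1) (μ + Dt m (T m ω)) = 0 := by
    rw [map_add, hanti, hST, hω, ← hA.1, add_neg_cancel]
  rcases le_or_gt (m + 1) J with hle | hlt
  · exact hSinj hle (by rw [hker, map_zero])
  · rw [piMap_succ_of_lt hlt, Prod.mk_eq_zero] at hPi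
    have horth := hPkerOrth (μ + Dt m (T m ω))
    rw [hPi.2, sub_zero] at horth
    exact Submodule.disjoint_def.mp (Submodule.orthogonal_disjoint _) _ hker horth

theorem piMap_zero_neg_T_apply_eq_zero {m : ℕ} (hTS : ∀ x, T m (S m x) = x - Pker m x)
    (hST : ∀ x, S m (T m x) = Pran m x) {ω : Z (m + 1)} (hω : Pran m ω = ω) :
    piMap D Dt Pran Pker T J m (0, -T m ω) = 0 := by
  rcases le_or_gt m J with hle | hlt
  · simp [piMap_of_le hle]
  · obtain ⟨k, rfl⟩ : ∃ k, m = k + 1 := Nat.exists_eq_add_one_of_ne_zero (by omega)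
    simp [piMap_succ_of_lt hlt, pker_T_apply_eq_zero hTS hST hω]

theorem eq_zero_of_piMap_zero_eq_zero (hSinj : Injective (S 0)) {y : Z 0 × Zt 0}
    (hPi : piMap D Dt Pran Pker T J 0 y = 0) (hA : twistA D Dt S 0 y = 0) : y = 0 := by
  obtain ⟨ω, μ⟩ := y
  have hω : ω = 0 := by simpa [piMap_of_le J.zero_le, projS] using congrArg Prod.fst hPi
  have hμ : μ = 0 := hSinj (by simpa [hω] using congrArg Prod.fst hA)
  simp [hω, hμ]

end

theorem stmt_10_general
    (n J : ℕ)
    {Z Zt : ℕ → Type*}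
    [∀ i, NormedAddCommGroup (Z i)] [∀ i, InnerProductSpace ℝ (Z i)]
    [∀ i, NormedAddCommGroup (Zt i)] [∀ i, InnerProductSpace ℝ (Zt i)]
    (D : ∀ i, Z i →L[ℝ] Z (i + 1)) (Dt : ∀ i, Zt i →L[ℝ] Zt (i + 1))
    (S : ∀ i, Zt i →L[ℝ] Z (i + 1))
    (Pran : ∀ i, Z (i + 1) →L[ℝ] Z (i + 1)) (Pker : ∀ i, Zt i →L[ℝ] Zt i)
    (T : ∀ i, Z (i + 1) →L[ℝ] Zt i)
    (hanti : ∀ i (x : Zt i), S (i + 1) (Dt i x) = -D (i + 1) (S i x))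
    (hSinj : ∀ i, i ≤ J → Function.Injective (S i))
    (hSsurj : ∀ i, J ≤ i → i + 1 ≤ n → Function.Surjective (S i))
    (hPranOrth : ∀ i (x : Z (i + 1)), x - Pran i x ∈ (LinearMap.range (S i : Zt i →ₗ[ℝ] Z (i + 1)))ᗮ)
    (hPkerOrth : ∀ i (x : Zt i), x - Pker i x ∈ (LinearMap.ker (S i : Zt i →ₗ[ℝ] Z (i + 1)))ᗮ)
    (hTS : ∀ i (x : Zt i), T i (S i x) = x - Pker i x)
    (hST : ∀ i (x : Z (i + 1)), S i (T i x) = Pran i x) :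
    -- for `1 ≤ i = m + 1 ≤ n`: any `y ∈ (I − Π^i)Y^i` with `𝒜^i y = 0` is `𝒜^{i-1} x`
    -- for some `x ∈ (I − Π^{i-1})Y^{i-1}`
    (∀ m, m + 1 ≤ n → ∀ y : Z (m + 1) × Zt (m + 1),
      piMap D Dt Pran Pker T J (m + 1) y = 0 →
      twistA D Dt S (m + 1) y = 0 →
        ∃ x : Z m × Zt m,
          piMap D Dt Pran Pker T J m x = 0 ∧ twistA D Dt S m x = y) ∧
    -- and at position `0`: `y ∈ (I − Π^0)Y^0` with `𝒜^0 y = 0` implies `y = 0`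
    (∀ y : Z 0 × Zt 0,
      piMap D Dt Pran Pker T J 0 y = 0 → twistA D Dt S 0 y = 0 → y = 0) := by
  refine ⟨fun m hm ⟨ω, μ⟩ hPi hA => ?_,
    fun _ => eq_zero_of_piMap_zero_eq_zero (hSinj 0 J.zero_le)⟩
  have hω : Pran m ω = ω :=
    pran_apply_eq_self_of_piMap_eq_zero (hSsurj m · hm) (hPranOrth m) hPi
  have hμ : μ + Dt m (T m ω) = 0 :=
    add_Dt_T_apply_eq_zero_of_piMap_eq_zero (hanti m) (hST m) (hSinj (m + 1))
      (hPkerOrth (m + 1)) hω hPi hA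
  refine ⟨(0, -T m ω), piMap_zero_neg_T_apply_eq_zero (hTS m) (hST m) hω, ?_⟩
  simpa [hST, hω] using add_eq_zero_iff_neg_eq'.mp hμ

theorem stmt_10
    (n J : ℕ) (hn : 1 ≤ n) (hJn : J + 1 ≤ n)
    {Z Zt : ℕ → Type*}
    [∀ i, NormedAddCommGroup (Z i)] [∀ i, InnerProductSpace ℝ (Z i)] [∀ i, CompleteSpace (Z i)]
    [∀ i, NormedAddCommGroup (Zt i)] [∀ i, InnerProductSpace ℝ (Zt i)] [∀ i, CompleteSpace (Zt i)]
    (D : ∀ i, Z i →L[ℝ] Z (i + 1)) (Dt : ∀ i, Zt i →L[ℝ] Zt (i + 1))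
    (S : ∀ i, Zt i →L[ℝ] Z (i + 1))
    (Pran : ∀ i, Z (i + 1) →L[ℝ] Z (i + 1)) (Pker : ∀ i, Zt i →L[ℝ] Zt i)
    (T : ∀ i, Z (i + 1) →L[ℝ] Zt i)
    (hDD : ∀ i (x : Z i), D (i + 1) (D i x) = 0)
    (hDtDt : ∀ i (x : Zt i), Dt (i + 1) (Dt i x) = 0)
    (hDtop : ∀ i, n ≤ i → D i = 0) (hDttop : ∀ i, n ≤ i → Dt i = 0)
    (hStop : ∀ i, n ≤ i → S i = 0)
    (hanti : ∀ i (x : Zt i), S (i + 1) (Dt i x) = -D (i + 1) (S i x))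
    (hScl : ∀ i, IsClosed ((LinearMap.range (S i : Zt i →ₗ[ℝ] Z (i + 1)) : Submodule ℝ (Z (i + 1))) : Set (Z (i + 1))))
    (hSinj : ∀ i, i ≤ J → Function.Injective (S i))
    (hSsurj : ∀ i, J ≤ i → i + 1 ≤ n → Function.Surjective (S i))
    (hPranMem : ∀ i (x : Z (i + 1)), Pran i x ∈ LinearMap.range (S i : Zt i →ₗ[ℝ] Z (i + 1)))
    (hPranOrth : ∀ i (x : Z (i + 1)), x - Pran i x ∈ (LinearMap.range (S i : Zt i →ₗ[ℝ] Z (i + 1)))ᗮ)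
    (hPkerMem : ∀ i (x : Zt i), Pker i x ∈ LinearMap.ker (S i : Zt i →ₗ[ℝ] Z (i + 1)))
    (hPkerOrth : ∀ i (x : Zt i), x - Pker i x ∈ (LinearMap.ker (S i : Zt i →ₗ[ℝ] Z (i + 1)))ᗮ)
    (hTzero : ∀ i, ∀ x ∈ (LinearMap.range (S i : Zt i →ₗ[ℝ] Z (i + 1)))ᗮ, T i x = 0)
    (hTS : ∀ i (x : Zt i), T i (S i x) = x - Pker i x)
    (hST : ∀ i (x : Z (i + 1)), S i (T i x) = Pran i x) :
    -- for `1 ≤ i = m + 1 ≤ n`: any `y ∈ (I − Π^i)Y^i` with `𝒜^i y = 0` is `𝒜^{i-1} x`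
    -- for some `x ∈ (I − Π^{i-1})Y^{i-1}`
    (∀ m, m + 1 ≤ n → ∀ y : Z (m + 1) × Zt (m + 1),
      piMap D Dt Pran Pker T J (m + 1) y = 0 →
      twistA D Dt S (m + 1) y = 0 →
        ∃ x : Z m × Zt m,
          piMap D Dt Pran Pker T J m x = 0 ∧ twistA D Dt S m x = y) ∧
    -- and at position `0`: `y ∈ (I − Π^0)Y^0` with `𝒜^0 y = 0` implies `y = 0`
    (∀ y : Z 0 × Zt 0,
      piMap D Dt Pran Pker T J 0 y = 0 → twistA D Dt S 0 y = 0 → y = 0) :=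
  stmt_10_general n J D Dt S Pran Pker T hanti hSinj hSsurj hPranOrth hPkerOrth hTS hST
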